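/- Let A be an m×n real matrix and b ∈ ℝᵐ with X = {x ∈ ℝⁿ : A x ≤ b} nonempty. Let Ā = [A | −b], K = { Āᵀ u : u ∈ ℝᵐ, u ≥ 0 } ⊆ ℝⁿ⁺¹, ē = (0,…,0,1) ∈ ℝⁿ⁺¹, z⋆ = P_K(ē) the metric projection of ē onto K, and γ = ‖z⋆ − ē‖. Then γ > 0, the last coordinate of (ē − z⋆)/γ² equals 1, and the first n coordinates of (ē − z⋆)/γ² form the unique least-norm point x⋆ of X; that is, (ē − z⋆)/γ² = (x⋆, 1). -/

import Mathlib

/-!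
Write `w = ē − z⋆`. Because `K` is a convex cone, the projection is characterised by `⟪w, z⋆⟫ = 0`
and `⟪w, z⟫ ≤ 0` on `K`, i.e. `Ā w ≤ 0`. Hence `⟪w, ē⟫ = ‖w‖² = γ²`: the last coordinate of `w` is
`γ²`, and `w / γ² = (x⋆, 1)` with `A x⋆ ≤ b`. For `y ∈ X`, `Ā (y, 1) ≤ 0` puts `(y, 1)` in the polar
of `K`, so `⟪(y, 1), w⟫ ≥ ⟪(y, 1), ē⟫ = 1`. This rules out `w = 0`, and after dividing by `γ²` it
reads `‖(x⋆, 1)‖² = 1/γ² ≤ ⟪(y, 1), (x⋆, 1)⟫`, i.e. `‖x⋆‖² ≤ ⟪y, x⋆⟫`, whence `‖x⋆‖ ≤ ‖y‖`.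
-/

open scoped RealInnerProductSpace Matrix

section ConeProjection

variable {E : Type*} [NormedAddCommGroup E] [InnerProductSpace ℝ E]

theorem real_inner_sub_nearest_sub_nonpos {K : Set E} {e p : E} (hK : Convex ℝ K) (hp : p ∈ K)
    (hmin : ∀ z ∈ K, dist e p ≤ dist e z) : ∀ z ∈ K, ⟪e - p, z - p⟫ ≤ 0 := by
  have : Nonempty K := ⟨⟨p, hp⟩⟩
  refine (norm_eq_iInf_iff_real_inner_le_zero hK hp).1 (le_antisymm ?_ ?_)
  · exact le_ciInf fun z => by simpa only [dist_eq_norm] using hmin z z.2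
  · refine ciInf_le ⟨0, ?_⟩ (⟨p, hp⟩ : K)
    exact Set.forall_mem_range.2 fun _ => norm_nonneg _

theorem real_inner_sub_nearest_of_cone {K : Set E} {e p : E} (hK : Convex ℝ K)
    (hcone : ∀ z ∈ K, ∀ t : ℝ, 0 ≤ t → t • z ∈ K) (hp : p ∈ K)
    (hmin : ∀ z ∈ K, dist e p ≤ dist e z) :
    ⟪e - p, p⟫ = 0 ∧ ∀ z ∈ K, ⟪e - p, z⟫ ≤ 0 := by
  have hvar := real_inner_sub_nearest_sub_nonpos hK hp hmin
  have h0 := hvar _ (hcone p hp 0 le_rfl)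
  have h2 := hvar _ (hcone p hp 2 zero_le_two)
  rw [zero_smul, zero_sub, inner_neg_right] at h0
  rw [two_smul, add_sub_cancel_right] at h2
  have hp0 : ⟪e - p, p⟫ = 0 := by linarith
  refine ⟨hp0, fun z hz => ?_⟩
  simpa only [inner_sub_right, hp0, sub_zero] using hvar z hz

theorem norm_le_norm_of_norm_sq_le_inner {x y : E} (h : ‖x‖ ^ 2 ≤ ⟪y, x⟫) : ‖x‖ ≤ ‖y‖ := by
  nlinarith [real_inner_le_norm y x, norm_nonneg x, norm_nonneg y]

end ConeProjection

theorem forall_nonneg_dotProduct_nonpos_iff {κ R : Type*} [Fintype κ] [Semiring R]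
    [PartialOrder R] [IsOrderedRing R] {p : κ → R} : (∀ u, 0 ≤ u → u ⬝ᵥ p ≤ 0) ↔ p ≤ 0 := by
  classical
  refine ⟨fun h i => ?_, fun hp u hu =>
    Finset.sum_nonpos fun i _ => mul_nonpos_of_nonneg_of_nonpos (hu i) (hp i)⟩
  simpa [single_dotProduct] using h (Pi.single i 1) (Pi.single_nonneg.2 zero_le_one)

theorem Fin.snoc_dotProduct_snoc {α : Type*} [Mul α] [AddCommMonoid α] {n : ℕ}
    (x y : Fin n → α) (a b : α) :
    (Fin.snoc x a : Fin (n + 1) → α) ⬝ᵥ Fin.snoc y b = x ⬝ᵥ y + a * b := by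
  simp [dotProduct, Fin.sum_univ_castSucc]

theorem Matrix.of_snoc_neg_mulVec_snoc {κ α : Type*} [CommRing α] {n : ℕ}
    (A : Matrix κ (Fin n) α) (b : κ → α) (x : Fin n → α) (t : α) :
    (of fun i => Fin.snoc (A i) (-(b i))) *ᵥ Fin.snoc x t = A *ᵥ x - t • b := by
  ext i
  simp [mulVec, Fin.snoc_dotProduct_snoc, mul_comm, sub_eq_add_neg]

theorem EuclideanSpace.inner_toLp_snoc_toLp_snoc {n : ℕ} (x y : EuclideanSpace ℝ (Fin n))
    (a b : ℝ) :
    ⟪WithLp.toLp 2 (Fin.snoc x a : Fin (n + 1) → ℝ), WithLp.toLp 2 (Fin.snoc y b)⟫ =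
      ⟪x, y⟫ + a * b := by
  simp only [EuclideanSpace.inner_eq_star_dotProduct, star_trivial,
    Fin.snoc_dotProduct_snoc, mul_comm]

theorem EuclideanSpace.norm_toLp_snoc_sq {n : ℕ} (x : EuclideanSpace ℝ (Fin n)) (a : ℝ) :
    ‖WithLp.toLp 2 (Fin.snoc x a : Fin (n + 1) → ℝ)‖ ^ 2 = ‖x‖ ^ 2 + a ^ 2 := by
  rw [← real_inner_self_eq_norm_sq, ← real_inner_self_eq_norm_sq, inner_toLp_snoc_toLp_snoc, sq]

theorem EuclideanSpace.inv_smul_eq_toLp_snoc_one {n : ℕ} (v : EuclideanSpace ℝ (Fin (n + 1)))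
    (hv : v (Fin.last n) ≠ 0) :
    (v (Fin.last n))⁻¹ • v =
      WithLp.toLp 2 (Fin.snoc ((v (Fin.last n))⁻¹ • WithLp.toLp 2 (Fin.init v)) 1 :
        Fin (n + 1) → ℝ) := by
  ext j
  induction j using Fin.lastCases <;> simp [hv, Fin.init]

theorem EuclideanSpace.norm_le_norm_of_norm_sq_le_inner_snoc {n : ℕ}
    {x y : EuclideanSpace ℝ (Fin n)} {a : ℝ}
    (h : ‖WithLp.toLp 2 (Fin.snoc x a : Fin (n + 1) → ℝ)‖ ^ 2 ≤
      ⟪WithLp.toLp 2 (Fin.snoc y a : Fin (n + 1) → ℝ), WithLp.toLp 2 (Fin.snoc x a)⟫) :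
    ‖x‖ ≤ ‖y‖ := by
  rw [norm_toLp_snoc_sq, inner_toLp_snoc_toLp_snoc] at h
  exact norm_le_norm_of_norm_sq_le_inner (by linarith)

namespace Matrix

variable {κ ι : Type*} [Fintype κ]

def rowCone (M : Matrix κ ι ℝ) : Set (EuclideanSpace ℝ ι) :=
  {z | ∃ u : κ → ℝ, 0 ≤ u ∧ z = (WithLp.equiv 2 (ι → ℝ)).symm (Mᵀ *ᵥ u)}

variable (M : Matrix κ ι ℝ)

theorem convex_rowCone : Convex ℝ M.rowCone := by
  rintro _ ⟨u₁, hu₁, rfl⟩ _ ⟨u₂, hu₂, rfl⟩ a c ha hc -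
  refine ⟨a • u₁ + c • u₂, add_nonneg (smul_nonneg ha hu₁) (smul_nonneg hc hu₂), ?_⟩
  simp [mulVec_add, mulVec_smul]

theorem smul_mem_rowCone {z : EuclideanSpace ℝ ι} (hz : z ∈ M.rowCone) {t : ℝ} (ht : 0 ≤ t) :
    t • z ∈ M.rowCone := by
  obtain ⟨u, hu, rfl⟩ := hz
  exact ⟨t • u, smul_nonneg ht hu, by simp [mulVec_smul]⟩

theorem forall_inner_rowCone_nonpos_iff [Fintype ι] (v : EuclideanSpace ℝ ι) :
    (∀ z ∈ M.rowCone, ⟪v, z⟫ ≤ 0) ↔ M *ᵥ v ≤ 0 := by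
  have key (u : κ → ℝ) : ⟪v, (WithLp.equiv 2 (ι → ℝ)).symm (Mᵀ *ᵥ u)⟫ = u ⬝ᵥ M *ᵥ v := by
    rw [WithLp.equiv_symm_apply, EuclideanSpace.inner_eq_star_dotProduct, star_trivial,
      WithLp.ofLp_toLp, mulVec_transpose, ← dotProduct_mulVec]
  rw [← forall_nonneg_dotProduct_nonpos_iff]
  constructor
  · intro h u hu
    rw [← key]
    exact h _ ⟨u, hu, rfl⟩
  · rintro h _ ⟨u, hu, rfl⟩
    rw [key]
    exact h u hu

theorem forall_inner_rowCone_of_snoc_neg_nonpos_iff {n : ℕ} (A : Matrix κ (Fin n) ℝ) (b : κ → ℝ)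
    (y : EuclideanSpace ℝ (Fin n)) :
    (∀ z ∈ (of fun i => Fin.snoc (A i) (-(b i))).rowCone,
      ⟪WithLp.toLp 2 (Fin.snoc y 1 : Fin (n + 1) → ℝ), z⟫ ≤ 0) ↔ A *ᵥ y ≤ b := by
  rw [forall_inner_rowCone_nonpos_iff, WithLp.ofLp_toLp, of_snoc_neg_mulVec_snoc, one_smul,
    sub_nonpos]

theorem one_le_inner_toLp_snoc_single_sub_of_mem_rowCone {n : ℕ} (A : Matrix κ (Fin n) ℝ)
    (b : κ → ℝ) {y : EuclideanSpace ℝ (Fin n)} (hy : A *ᵥ y ≤ b)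
    {z : EuclideanSpace ℝ (Fin (n + 1))} (hz : z ∈ (of fun i => Fin.snoc (A i) (-(b i))).rowCone) :
    1 ≤ ⟪WithLp.toLp 2 (Fin.snoc y 1 : Fin (n + 1) → ℝ),
      EuclideanSpace.single (Fin.last n) 1 - z⟫ := by
  have hyz := (forall_inner_rowCone_of_snoc_neg_nonpos_iff A b y).2 hy z hz
  rw [inner_sub_right, EuclideanSpace.inner_single_right]
  simp only [conj_trivial, one_mul, Fin.snoc_last]
  linarith

end Matrix

/-- With `X = {x : A x ≤ b}` nonempty, `Ā = [A | −b]`,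
`K = {Āᵀu : u ≥ 0}`, `ē = (0,…,0,1)`, `z⋆ = P_K(ē)` (the metric projection of `ē` onto
`K`, characterized as the distance minimizer) and `γ = ‖z⋆ − ē‖`: one has `γ > 0` and
`(ē − z⋆)/γ² = (x⋆, 1)`, where `x⋆` is the unique least-norm point of `X`. -/
theorem cone_projection_recovers_least_norm_point
    (m n : ℕ) (A : Matrix (Fin m) (Fin n) ℝ) (b : Fin m → ℝ)
    (X : Set (EuclideanSpace ℝ (Fin n)))
    (hX : X = {x : EuclideanSpace ℝ (Fin n) | A.mulVec x ≤ b})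
    (hXne : X.Nonempty)
    (Abar : Matrix (Fin m) (Fin (n + 1)) ℝ)
    (hAbar : Abar = Matrix.of fun i => Fin.snoc (A i) (-(b i)))
    (K : Set (EuclideanSpace ℝ (Fin (n + 1))))
    (hK : K = {z : EuclideanSpace ℝ (Fin (n + 1)) | ∃ u : Fin m → ℝ, 0 ≤ u ∧
        z = (WithLp.equiv 2 (Fin (n + 1) → ℝ)).symm (Abar.transpose.mulVec u)})
    (ebar : EuclideanSpace ℝ (Fin (n + 1)))
    (hebar : ebar = EuclideanSpace.single (Fin.last n) 1)
    (zstar : EuclideanSpace ℝ (Fin (n + 1)))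
    (hzstar : zstar ∈ K ∧ ∀ z ∈ K, dist ebar zstar ≤ dist ebar z)
    (γ : ℝ) (hγ : γ = ‖zstar - ebar‖) :
    0 < γ ∧
      ∃ xstar : EuclideanSpace ℝ (Fin n),
        (xstar ∈ X ∧ ∀ y ∈ X, ‖xstar‖ ≤ ‖y‖) ∧
        (γ ^ 2)⁻¹ • (ebar - zstar) =
          (WithLp.equiv 2 (Fin (n + 1) → ℝ)).symm (Fin.snoc xstar 1) := by
  subst hX hAbar hK hebar
  obtain ⟨hzK, hzmin⟩ := hzstar
  obtain ⟨hwz, hwK⟩ := real_inner_sub_nearest_of_cone (Matrix.convex_rowCone _)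
    (fun _ hz _ ht => Matrix.smul_mem_rowCone _ hz ht) hzK hzmin
  have hone (y : EuclideanSpace ℝ (Fin n)) (hy : A *ᵥ y ≤ b) :=
    Matrix.one_le_inner_toLp_snoc_single_sub_of_mem_rowCone A b hy hzK
  set w := EuclideanSpace.single (Fin.last n) 1 - zstar with hw
  have hnorm : ‖w‖ = γ := by rw [hγ, norm_sub_rev]
  have hlast : w (Fin.last n) = γ ^ 2 := by
    have : ⟪w, w + zstar⟫ = ⟪w, w⟫ + ⟪w, zstar⟫ := inner_add_right _ _ _
    rwa [hwz, add_zero, real_inner_self_eq_norm_sq, hnorm, hw, sub_add_cancel,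
      EuclideanSpace.inner_single_right, one_mul, conj_trivial] at this
  have hγpos : 0 < γ := by
    obtain ⟨y, hy⟩ := hXne
    exact hnorm ▸ norm_pos_iff.2 fun h0 => absurd (hone y hy) (by simp [h0])
  have hscaled := w.inv_smul_eq_toLp_snoc_one (by rw [hlast]; positivity)
  rw [hlast] at hscaled
  refine ⟨hγpos, _, ⟨?_, fun y hy => ?_⟩, hscaled⟩
  · rw [Set.mem_ofPred_eq, ← Matrix.forall_inner_rowCone_of_snoc_neg_nonpos_iff, ← hscaled]
    intro z hz
    rw [inner_smul_left]
    exact mul_nonpos_of_nonneg_of_nonpos (by simp [sq_nonneg]) (hwK z hz)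
  · apply EuclideanSpace.norm_le_norm_of_norm_sq_le_inner_snoc
    rw [← hscaled]
    calc ‖(γ ^ 2)⁻¹ • w‖ ^ 2 = (γ ^ 2)⁻¹ * 1 := by
          rw [norm_smul, mul_pow, hnorm, norm_inv, norm_pow, Real.norm_eq_abs, sq_abs]
          field_simp
      _ ≤ (γ ^ 2)⁻¹ * ⟪_, w⟫ := by gcongr; exact hone y hy
      _ = _ := (inner_smul_right _ _ _).symm
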